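/- arXiv:1205.0377 — 2 statements merged into one kernel-verified Lean document; each statement's English description precedes it below -/
import Mathlib

section
/- The function φ(x) = (9 − 24x²) cos x − 9 cos(3x) − 4x sin(3x) satisfies φ(x) > 0 for every x with 0 < x ≤ √3. -/
/-!
By the triple-angle formulas and `sin² + cos² = 1`,
`φ(x) = 36 sin² x cos x - 24 x² cos x - 12 x sin x + 16 x sin³ x`. Since `φ(x) ~ 32 x⁸ / 105`,
the alternating Taylor bounds for `sin` and `cos` up to degree 7 and 8, valid for `x ≥ 0`, lose
only `O(x⁸)` with a small constant; what remains is `x⁸` times a polynomial in `x²` that is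
bounded below by its constant term minus its negative terms evaluated at `x² = 3`.
-/

open Real Finset
open scoped Nat

noncomputable def cosTaylor (n : ℕ) (x : ℝ) : ℝ :=
  ∑ k ∈ range n, (-1) ^ k * x ^ (2 * k) / (2 * k)!

noncomputable def sinTaylor (n : ℕ) (x : ℝ) : ℝ :=
  ∑ k ∈ range n, (-1) ^ k * x ^ (2 * k + 1) / (2 * k + 1)!

lemma apply_zero_le_of_hasDerivAt_nonneg {f f' : ℝ → ℝ} (hf : ∀ t, HasDerivAt f (f' t) t)
    (hf' : ∀ t, 0 ≤ t → 0 ≤ f' t) {x : ℝ} (hx : 0 ≤ x) : f 0 ≤ f x :=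
  monotoneOn_of_hasDerivWithinAt_nonneg (convex_Ici 0)
    (fun t _ => (hf t).continuousAt.continuousWithinAt) (fun t _ => (hf t).hasDerivWithinAt)
    (fun t ht => hf' t (interior_subset ht)) Set.self_mem_Ici (Set.mem_Ici.2 hx) hx

lemma hasDerivAt_sinTaylor (n : ℕ) (x : ℝ) : HasDerivAt (sinTaylor n) (cosTaylor n x) x := by
  refine HasDerivAt.fun_sum fun k _ => ?_
  refine (((hasDerivAt_pow (2 * k + 1) x).const_mul ((-1 : ℝ) ^ k)).div_const
    ((2 * k + 1)! : ℝ)).congr_deriv ?_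
  rw [Nat.factorial_succ, Nat.add_sub_cancel]
  push_cast
  field_simp

lemma hasDerivAt_cosTaylor_succ (n : ℕ) (x : ℝ) :
    HasDerivAt (cosTaylor (n + 1)) (-sinTaylor n x) x := by
  have h : cosTaylor (n + 1) =
      fun y => ∑ k ∈ range n, (-1) ^ (k + 1) * y ^ (2 * k + 2) / ((2 * k + 2)! : ℝ) + 1 := by
    ext y
    simp [cosTaylor, sum_range_succ', mul_add]
  rw [h, sinTaylor, ← sum_neg_distrib]
  refine (HasDerivAt.fun_sum fun k _ => ?_).add_const 1
  refine (((hasDerivAt_pow (2 * k + 2) x).const_mul ((-1 : ℝ) ^ (k + 1))).div_const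
    ((2 * k + 2)! : ℝ)).congr_deriv ?_
  rw [Nat.factorial_succ, show 2 * k + 2 - 1 = 2 * k + 1 by omega]
  push_cast
  field_simp
  ring

lemma cosTaylor_succ_zero (n : ℕ) : cosTaylor (n + 1) 0 = 1 := by
  simp [cosTaylor, sum_range_succ']

lemma neg_one_pow_mul_sin_sub_sinTaylor_nonneg_of_cos {n : ℕ}
    (h : ∀ t, 0 ≤ t → 0 ≤ (-1) ^ n * (cos t - cosTaylor n t)) {x : ℝ} (hx : 0 ≤ x) :
    0 ≤ (-1) ^ n * (sin x - sinTaylor n x) := by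
  simpa [sinTaylor] using apply_zero_le_of_hasDerivAt_nonneg
    (fun t => ((hasDerivAt_sin t).sub (hasDerivAt_sinTaylor n t)).const_mul ((-1 : ℝ) ^ n)) h hx

lemma neg_one_pow_mul_cos_sub_cosTaylor_succ_nonneg_of_sin {n : ℕ}
    (h : ∀ t, 0 ≤ t → 0 ≤ (-1) ^ n * (sin t - sinTaylor n t)) {x : ℝ} (hx : 0 ≤ x) :
    0 ≤ (-1) ^ (n + 1) * (cos x - cosTaylor (n + 1) x) := by
  have hd (t : ℝ) : HasDerivAt (fun y => (-1) ^ (n + 1) * (cos y - cosTaylor (n + 1) y))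
      ((-1) ^ n * (sin t - sinTaylor n t)) t := by
    refine (((hasDerivAt_cos t).sub (hasDerivAt_cosTaylor_succ n t)).const_mul
      ((-1 : ℝ) ^ (n + 1))).congr_deriv ?_
    ring
  simpa [cosTaylor_succ_zero] using apply_zero_le_of_hasDerivAt_nonneg hd h hx

theorem neg_one_pow_succ_mul_cos_sub_cosTaylor_nonneg (n : ℕ) {x : ℝ} (hx : 0 ≤ x) :
    0 ≤ (-1) ^ (n + 1) * (cos x - cosTaylor (n + 1) x) := by
  induction n generalizing x with
  | zero => simpa [cosTaylor] using cos_le_one x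
  | succ n ih =>
    exact neg_one_pow_mul_cos_sub_cosTaylor_succ_nonneg_of_sin
      (fun t ht => neg_one_pow_mul_sin_sub_sinTaylor_nonneg_of_cos (fun _ => ih) ht) hx

theorem neg_one_pow_succ_mul_sin_sub_sinTaylor_nonneg (n : ℕ) {x : ℝ} (hx : 0 ≤ x) :
    0 ≤ (-1) ^ (n + 1) * (sin x - sinTaylor (n + 1) x) :=
  neg_one_pow_mul_sin_sub_sinTaylor_nonneg_of_cos
    (fun _ ht => neg_one_pow_succ_mul_cos_sub_cosTaylor_nonneg n ht) hx

lemma cosTaylor_le_cos (m : ℕ) {x : ℝ} (hx : 0 ≤ x) : cosTaylor (2 * m + 2) x ≤ cos x := by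
  have h := neg_one_pow_succ_mul_cos_sub_cosTaylor_nonneg (2 * m + 1) hx
  rw [(Even.neg_one_pow ⟨m + 1, by ring⟩ : (-1 : ℝ) ^ (2 * m + 1 + 1) = 1)] at h
  linarith

lemma cos_le_cosTaylor (m : ℕ) {x : ℝ} (hx : 0 ≤ x) : cos x ≤ cosTaylor (2 * m + 1) x := by
  have h := neg_one_pow_succ_mul_cos_sub_cosTaylor_nonneg (2 * m) hx
  rw [(Odd.neg_one_pow ⟨m, rfl⟩ : (-1 : ℝ) ^ (2 * m + 1) = -1)] at h
  linarith

lemma sinTaylor_le_sin (m : ℕ) {x : ℝ} (hx : 0 ≤ x) : sinTaylor (2 * m + 2) x ≤ sin x := by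
  have h := neg_one_pow_succ_mul_sin_sub_sinTaylor_nonneg (2 * m + 1) hx
  rw [(Even.neg_one_pow ⟨m + 1, by ring⟩ : (-1 : ℝ) ^ (2 * m + 1 + 1) = 1)] at h
  linarith

lemma sin_le_sinTaylor (m : ℕ) {x : ℝ} (hx : 0 ≤ x) : sin x ≤ sinTaylor (2 * m + 1) x := by
  have h := neg_one_pow_succ_mul_sin_sub_sinTaylor_nonneg (2 * m) hx
  rw [(Odd.neg_one_pow ⟨m, rfl⟩ : (-1 : ℝ) ^ (2 * m + 1) = -1)] at h
  linarith

lemma sinTaylor_three (x : ℝ) : sinTaylor 3 x = x - x ^ 3 / 6 + x ^ 5 / 120 := by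
  simp [sinTaylor, sum_range_succ, Nat.factorial]
  ring

lemma sinTaylor_four (x : ℝ) : sinTaylor 4 x = x - x ^ 3 / 6 + x ^ 5 / 120 - x ^ 7 / 5040 := by
  simp [sinTaylor, sum_range_succ, Nat.factorial]
  ring

lemma cosTaylor_four (x : ℝ) : cosTaylor 4 x = 1 - x ^ 2 / 2 + x ^ 4 / 24 - x ^ 6 / 720 := by
  simp [cosTaylor, sum_range_succ, Nat.factorial]
  ring

lemma cosTaylor_five (x : ℝ) :
    cosTaylor 5 x = 1 - x ^ 2 / 2 + x ^ 4 / 24 - x ^ 6 / 720 + x ^ 8 / 40320 := by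
  simp [cosTaylor, sum_range_succ, Nat.factorial]
  ring

lemma taylorPoly_combination_pos {x : ℝ} (hx : 0 < x) (hx3 : x ^ 2 ≤ 3) :
    0 < 36 * sinTaylor 4 x ^ 2 * cosTaylor 4 x - x ^ 8 / 70 - 24 * x ^ 2 * cosTaylor 5 x
      - 12 * x * sinTaylor 3 x + 16 * x * sinTaylor 4 x ^ 3 := by
  rw [sinTaylor_three, sinTaylor_four, cosTaylor_four, cosTaylor_five]
  have hpow (k : ℕ) : x ^ (8 + 2 * k) ≤ 3 ^ k * x ^ 8 := by
    rw [pow_add, pow_mul, mul_comm]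
    exact mul_le_mul_of_nonneg_right (pow_le_pow_left₀ (sq_nonneg x) hx3 k) (by positivity)
  have h10 := hpow 1
  have h14 := hpow 3
  have h18 := hpow 5
  have h22 := hpow 7
  norm_num at h10 h14 h18 h22
  linarith [pow_pos hx 8, pow_nonneg hx.le 12, pow_nonneg hx.le 16, pow_nonneg hx.le 20]

lemma combination_pos_of_taylor_bounds {x s c : ℝ} (hx : 0 < x) (hx3 : x ^ 2 ≤ 3)
    (hs₁ : sinTaylor 4 x ≤ s) (hs₂ : s ≤ sinTaylor 3 x)
    (hc₁ : cosTaylor 4 x ≤ c) (hc₂ : c ≤ cosTaylor 5 x) :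
    0 < 36 * s ^ 2 * c - 24 * x ^ 2 * c - 12 * x * s + 16 * x * s ^ 3 := by
  have hS₄ : 0 ≤ sinTaylor 4 x := by
    rw [sinTaylor_four]
    nlinarith [pow_pos hx 3, pow_pos hx 5, pow_pos hx 7]
  have hC₄ : -1 ≤ cosTaylor 4 x := by
    rw [cosTaylor_four]
    nlinarith [pow_nonneg (sq_nonneg x) 2, pow_nonneg (sq_nonneg x) 3]
  have hS₃ : sinTaylor 3 x ≤ x := by
    rw [sinTaylor_three]
    nlinarith [pow_pos hx 3]
  have hgap : sinTaylor 3 x - sinTaylor 4 x = x ^ 7 / 5040 := by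
    rw [sinTaylor_three, sinTaylor_four]
    ring
  -- `(s - S₄)(s + S₄) ≤ (x⁷/5040)(2x)`; times 36 this is the `x⁸/70` of `taylorPoly_combination_pos`.
  have hsq : s ^ 2 - sinTaylor 4 x ^ 2 ≤ x ^ 8 / 2520 := by
    nlinarith [mul_le_mul (show s - sinTaylor 4 x ≤ x ^ 7 / 5040 by linarith)
      (show s + sinTaylor 4 x ≤ 2 * x by linarith) (by linarith) (by positivity)]
  have hA : 36 * sinTaylor 4 x ^ 2 * cosTaylor 4 x - x ^ 8 / 70 ≤ 36 * s ^ 2 * c := by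
    nlinarith [mul_le_mul_of_nonneg_left hc₁ (sq_nonneg s),
      mul_nonneg (sub_nonneg.2 (pow_le_pow_left₀ hS₄ hs₁ 2)) (neg_le_iff_add_nonneg.1 hC₄)]
  have hB : 24 * x ^ 2 * c ≤ 24 * x ^ 2 * cosTaylor 5 x :=
    mul_le_mul_of_nonneg_left hc₂ (by positivity)
  have hC : 12 * x * s ≤ 12 * x * sinTaylor 3 x := mul_le_mul_of_nonneg_left hs₂ (by positivity)
  have hD : 16 * x * sinTaylor 4 x ^ 3 ≤ 16 * x * s ^ 3 :=
    mul_le_mul_of_nonneg_left (pow_le_pow_left₀ hS₄ hs₁ 3) (by positivity)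
  linarith [taylorPoly_combination_pos hx hx3]

lemma phi_eq_sin_cos_combination (x : ℝ) :
    (9 - 24 * x ^ 2) * cos x - 9 * cos (3 * x) - 4 * x * sin (3 * x) =
      36 * sin x ^ 2 * cos x - 24 * x ^ 2 * cos x - 12 * x * sin x + 16 * x * sin x ^ 3 := by
  rw [cos_three_mul, sin_three_mul]
  linear_combination (-36 * cos x) * sin_sq_add_cos_sq x

theorem phi_pos_sqrt3 (x : ℝ) (hx : 0 < x) (hx2 : x ≤ Real.sqrt 3) :
    0 < (9 - 24 * x ^ 2) * Real.cos x - 9 * Real.cos (3 * x) - 4 * x * Real.sin (3 * x) := by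
  have hx3 : x ^ 2 ≤ 3 := by
    simpa using pow_le_pow_left₀ hx.le hx2 2
  rw [phi_eq_sin_cos_combination]
  exact combination_pos_of_taylor_bounds hx hx3 (sinTaylor_le_sin 1 hx.le)
    (sin_le_sinTaylor 1 hx.le) (cosTaylor_le_cos 1 hx.le) (cos_le_cosTaylor 2 hx.le)
end

section
/- If α and β are real numbers in [0,3] such that (tan x/x)^α ≤ 3(tan x − x)/x³ ≤ (tan x/x)^β for all x in (0, π/2), then α ≤ 1 and β ≥ 6/5. -/
/-!
Near `π / 2` the ratio `tan x / x` tends to infinity while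
`3 (tan x - x) / x³ ≤ 3 tan x / x` for `x ≥ 1`, so `(tan x / x) ^ α ≤ 3 (tan x / x)` forces
`α ≤ 1`.

Near `0`, `tan x / x = 1 + x² / 3 + O(x⁴)` and `3 (tan x - x) / x³ ≥ 1 + 2 x² / 5`. Taking
logarithms, `β ≥ log (3 (tan x - x) / x³) / log (tan x / x)`, whose lower bound tends to
`(2 / 5) / (1 / 3) = 6 / 5`. The Taylor bounds for `tan` are obtained by bootstrapping the
differential equation `tan' = 1 + tan²`: a polynomial lower (upper) bound on `tan` gives one on
`tan'`, which integrates to a sharper bound on `tan`.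
-/

open Real Set Filter Topology

lemma hasDerivAt_tan_eq_one_add_tan_sq {x : ℝ} (hx : x ∈ Ioo (-(π / 2)) (π / 2)) :
    HasDerivAt tan (1 + tan x ^ 2) x := by
  have hcos : cos x ≠ 0 := (cos_pos_of_mem_Ioo hx).ne'
  convert hasDerivAt_tan hcos using 1
  rw [← inv_one_add_tan_sq hcos, one_div, inv_inv]

lemma le_tan_of_hasDerivAt_le {p p' : ℝ → ℝ} {x : ℝ} (hx₀ : 0 ≤ x) (hx : x < π / 2)
    (hp : ∀ t, HasDerivAt p (p' t) t) (hp₀ : p 0 = 0)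
    (hp' : ∀ t ∈ Ico 0 x, p' t ≤ 1 + tan t ^ 2) : p x ≤ tan x := by
  have htan : ∀ t ∈ Icc 0 x, HasDerivAt tan (1 + tan t ^ 2) t := fun t ht =>
    hasDerivAt_tan_eq_one_add_tan_sq ⟨by linarith [ht.1, pi_pos], ht.2.trans_lt hx⟩
  refine image_le_of_deriv_right_le_deriv_boundary
    (fun t _ => (hp t).continuousAt.continuousWithinAt) (fun t _ => (hp t).hasDerivWithinAt)
    (by simp [hp₀]) (fun t ht => (htan t ht).continuousAt.continuousWithinAt)
    (fun t ht => (htan t (Ico_subset_Icc_self ht)).hasDerivWithinAt) hp' ⟨hx₀, le_rfl⟩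

lemma tan_le_of_le_hasDerivAt {p p' : ℝ → ℝ} {x : ℝ} (hx₀ : 0 ≤ x) (hx : x < π / 2)
    (hp : ∀ t, HasDerivAt p (p' t) t) (hp₀ : p 0 = 0)
    (hp' : ∀ t ∈ Ico 0 x, 1 + tan t ^ 2 ≤ p' t) : tan x ≤ p x := by
  have htan : ∀ t ∈ Icc 0 x, HasDerivAt tan (1 + tan t ^ 2) t := fun t ht =>
    hasDerivAt_tan_eq_one_add_tan_sq ⟨by linarith [ht.1, pi_pos], ht.2.trans_lt hx⟩
  refine image_le_of_deriv_right_le_deriv_boundary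
    (fun t ht => (htan t ht).continuousAt.continuousWithinAt)
    (fun t ht => (htan t (Ico_subset_Icc_self ht)).hasDerivWithinAt)
    (by simp [hp₀]) (fun t _ => (hp t).continuousAt.continuousWithinAt)
    (fun t _ => (hp t).hasDerivWithinAt) hp' ⟨hx₀, le_rfl⟩

lemma add_pow_three_div_three_le_tan {x : ℝ} (hx₀ : 0 ≤ x) (hx : x < π / 2) :
    x + x ^ 3 / 3 ≤ tan x := by
  refine le_tan_of_hasDerivAt_le hx₀ hx (p := fun t => t + t ^ 3 / 3) (p' := fun t => 1 + t ^ 2)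
    (fun t => ((hasDerivAt_id' t).add ((hasDerivAt_pow 3 t).div_const 3)).congr_deriv
      (by norm_num)) (by simp) fun t ht => ?_
  have := le_tan ht.1 (ht.2.trans hx)
  gcongr
  exact ht.1

lemma tan_lower_bound {x : ℝ} (hx₀ : 0 ≤ x) (hx : x < π / 2) :
    x + x ^ 3 / 3 + 2 * x ^ 5 / 15 ≤ tan x := by
  refine le_tan_of_hasDerivAt_le hx₀ hx (p := fun t => t + t ^ 3 / 3 + 2 * t ^ 5 / 15)
    (p' := fun t => 1 + t ^ 2 + 2 * t ^ 4 / 3)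
    (fun t => (((hasDerivAt_id' t).add ((hasDerivAt_pow 3 t).div_const 3)).add
        (((hasDerivAt_pow 5 t).const_mul 2).div_const 15)).congr_deriv (by norm_num; ring))
    (by simp) fun t ht => ?_
  have := add_pow_three_div_three_le_tan ht.1 (ht.2.trans hx)
  have ht0 : 0 ≤ t + t ^ 3 / 3 := by have := ht.1; positivity
  nlinarith [pow_le_pow_left₀ ht0 this 2, pow_nonneg ht.1 6]

lemma tan_le_add_pow_three {x : ℝ} (hx₀ : 0 ≤ x) (hx : x ≤ 1) : tan x ≤ x + x ^ 3 := by
  have hcos : 1 - x ^ 2 / 2 ≤ cos x := one_sub_sq_div_two_le_cos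
  have hpos : 0 < 1 - x ^ 2 / 2 := by nlinarith
  rw [tan_eq_sin_div_cos, div_le_iff₀ (hpos.trans_le hcos)]
  calc sin x ≤ x := sin_le hx₀
    _ ≤ (x + x ^ 3) * (1 - x ^ 2 / 2) := by
      nlinarith [mul_nonneg (pow_nonneg hx₀ 3) (by nlinarith : (0 : ℝ) ≤ 1 - x ^ 2)]
    _ ≤ (x + x ^ 3) * cos x := by gcongr

lemma tan_upper_bound {x : ℝ} (hx₀ : 0 ≤ x) (hx : x ≤ 1) :
    tan x ≤ x + x ^ 3 / 3 + 3 * x ^ 5 / 5 := by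
  have hpi : x < π / 2 := by linarith [pi_gt_three]
  refine tan_le_of_le_hasDerivAt hx₀ hpi (p := fun t => t + t ^ 3 / 3 + 3 * t ^ 5 / 5)
    (p' := fun t => 1 + t ^ 2 + 3 * t ^ 4)
    (fun t => (((hasDerivAt_id' t).add ((hasDerivAt_pow 3 t).div_const 3)).add
        (((hasDerivAt_pow 5 t).const_mul 3).div_const 5)).congr_deriv (by norm_num; ring))
    (by simp) fun t ht => ?_
  have ht1 : t ≤ 1 := ht.2.le.trans hx
  have := tan_le_add_pow_three ht.1 ht1
  have htan : 0 ≤ tan t := ht.1.trans (le_tan ht.1 (ht.2.trans hpi))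
  nlinarith [pow_le_pow_left₀ htan this 2,
    mul_nonneg (pow_nonneg ht.1 4) (by nlinarith : (0 : ℝ) ≤ 1 - t ^ 2)]

lemma log_div_log_le_of_le_rpow {a b β : ℝ} (ha : 1 < a) (hb : 0 < b) (h : b ≤ a ^ β) :
    log b / log a ≤ β := by
  rw [div_le_iff₀ (log_pos ha)]
  calc log b ≤ log (a ^ β) := log_le_log hb h
    _ = β * log a := log_rpow (by linarith) β

lemma div_div_le_of_le_rpow {a b r s β : ℝ} (hr : 0 < r) (ha : 1 < a) (has : a ≤ 1 + s)
    (hbr : 1 + r ≤ b) (h : b ≤ a ^ β) : r / (1 + r) / s ≤ β := by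
  have hb : 0 < b := by linarith
  have hlog_b : r / (1 + r) ≤ log b := by
    have h₁ : 1 - b⁻¹ ≤ log b := one_sub_inv_le_log_of_pos hb
    have h₂ : b⁻¹ ≤ (1 + r)⁻¹ := inv_anti₀ (by positivity) hbr
    have h₃ : 1 - (1 + r)⁻¹ = r / (1 + r) := by field_simp; ring
    linarith
  have hlog_a : log a ≤ s := by linarith [log_le_sub_one_of_pos (zero_lt_one.trans ha)]
  calc r / (1 + r) / s ≤ log b / s := by gcongr; linarith
    _ ≤ log b / log a := by gcongr; exacts [hlog_b.trans' (by positivity), log_pos ha]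
    _ ≤ β := log_div_log_le_of_le_rpow ha hb h

lemma six_div_five_div_le_of_le_rpow {x β : ℝ} (hx₀ : 0 < x) (hx : x ≤ 1)
    (h : 3 * (tan x - x) / x ^ 3 ≤ (tan x / x) ^ β) :
    6 / 5 / ((1 + 2 * x ^ 2 / 5) * (1 + 9 * x ^ 2 / 5)) ≤ β := by
  have hπ : x < π / 2 := by linarith [pi_gt_three]
  have hlower := tan_lower_bound hx₀.le hπ
  have hupper := tan_upper_bound hx₀.le hx
  have ha : 1 < tan x / x := by rw [one_lt_div hx₀]; exact lt_tan hx₀ hπ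
  have has : tan x / x ≤ 1 + (x ^ 2 / 3 + 3 * x ^ 4 / 5) := by
    rw [div_le_iff₀ hx₀]; linarith
  have hbr : 1 + 2 * x ^ 2 / 5 ≤ 3 * (tan x - x) / x ^ 3 := by
    rw [le_div_iff₀ (by positivity)]; linarith
  convert div_div_le_of_le_rpow (by positivity) ha has hbr h using 1
  field_simp
  ring

lemma six_div_five_le_of_forall_le_rpow {β : ℝ}
    (h : ∀ x, 0 < x → x < π / 2 → 3 * (tan x - x) / x ^ 3 ≤ (tan x / x) ^ β) :
    6 / 5 ≤ β := by
  have hlim : Tendsto (fun x : ℝ => 6 / 5 / ((1 + 2 * x ^ 2 / 5) * (1 + 9 * x ^ 2 / 5)))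
      (𝓝[>] 0) (𝓝 (6 / 5)) := by
    have hcont : Continuous fun x : ℝ => 6 / 5 / ((1 + 2 * x ^ 2 / 5) * (1 + 9 * x ^ 2 / 5)) :=
      continuous_const.div (by fun_prop) fun x => by positivity
    simpa using (hcont.tendsto 0).mono_left nhdsWithin_le_nhds
  refine le_of_tendsto hlim ?_
  filter_upwards [Ioo_mem_nhdsGT (zero_lt_one' ℝ)] with x hx
  exact six_div_five_div_le_of_le_rpow hx.1 hx.2.le (h x hx.1 (by linarith [pi_gt_three, hx.2]))

lemma tendsto_tan_div_self_nhdsLT_pi_div_two :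
    Tendsto (fun x => tan x / x) (𝓝[<] (π / 2)) atTop := by
  have hinv : Tendsto (fun x : ℝ => x⁻¹) (𝓝[<] (π / 2)) (𝓝 (π / 2)⁻¹) :=
    ((continuousAt_inv₀ (by positivity)).tendsto).mono_left nhdsWithin_le_nhds
  exact tendsto_tan_pi_div_two.atTop_mul_pos (by positivity) hinv

lemma rpow_sub_one_le_three_of_rpow_le {x α : ℝ} (hx : 1 ≤ x) (hπ : x < π / 2)
    (h : (tan x / x) ^ α ≤ 3 * (tan x - x) / x ^ 3) : (tan x / x) ^ (α - 1) ≤ 3 := by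
  have hx₀ : 0 < x := zero_lt_one.trans_le hx
  have ht : 0 < tan x / x := div_pos (hx₀.trans (lt_tan hx₀ hπ)) hx₀
  have hrhs : 3 * (tan x - x) / x ^ 3 ≤ 3 * (tan x / x) := by
    calc 3 * (tan x - x) / x ^ 3 ≤ 3 * tan x / x ^ 3 := by gcongr; linarith
      _ ≤ 3 * tan x / x := by
        gcongr
        · linarith [lt_tan hx₀ hπ]
        · exact le_self_pow₀ hx (by norm_num)
      _ = 3 * (tan x / x) := mul_div_assoc _ _ _
  rw [rpow_sub_one ht.ne', div_le_iff₀ ht]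
  exact h.trans hrhs

lemma le_one_of_forall_rpow_le {α : ℝ}
    (h : ∀ x, 0 < x → x < π / 2 → (tan x / x) ^ α ≤ 3 * (tan x - x) / x ^ 3) :
    α ≤ 1 := by
  by_contra! hα
  have hbig : ∀ᶠ x in 𝓝[<] (π / 2), 3 < (tan x / x) ^ (α - 1) :=
    ((tendsto_rpow_atTop (by linarith)).comp
      tendsto_tan_div_self_nhdsLT_pi_div_two).eventually_gt_atTop 3
  have hnear : Ioo 1 (π / 2) ∈ 𝓝[<] (π / 2) :=
    Ioo_mem_nhdsLT (by linarith [pi_gt_three])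
  obtain ⟨x, hx3, hx1, hxπ⟩ := (hbig.and hnear).exists
  exact hx3.not_ge (rpow_sub_one_le_three_of_rpow_le hx1.le hxπ (h x (by linarith) hxπ))

theorem best_exponents_general (α β : ℝ)
    (h : ∀ x : ℝ, 0 < x → x < Real.pi / 2 →
      (Real.tan x / x) ^ α ≤ 3 * (Real.tan x - x) / x ^ 3 ∧
      3 * (Real.tan x - x) / x ^ 3 ≤ (Real.tan x / x) ^ β) :
    α ≤ 1 ∧ 6 / 5 ≤ β :=
  ⟨le_one_of_forall_rpow_le fun x hx hxπ => (h x hx hxπ).1,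
    six_div_five_le_of_forall_le_rpow fun x hx hxπ => (h x hx hxπ).2⟩

theorem best_exponents (α β : ℝ) (hα : α ∈ Set.Icc (0 : ℝ) 3) (hβ : β ∈ Set.Icc (0 : ℝ) 3)
    (h : ∀ x : ℝ, 0 < x → x < Real.pi / 2 →
      (Real.tan x / x) ^ α ≤ 3 * (Real.tan x - x) / x ^ 3 ∧
      3 * (Real.tan x - x) / x ^ 3 ≤ (Real.tan x / x) ^ β) :
    α ≤ 1 ∧ 6 / 5 ≤ β :=
  best_exponents_general α β h
end
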